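/- Let F be a polynomial of degree n with complex coefficients having all its zeros in the closed unit disk |z| ≤ 1, and let P be a polynomial of degree at most n such that |P(z)| ≤ |F(z)| for all |z| = 1. Then for all α, γ ∈ ℂ with Re(α) ≤ n/2 and Re(γ) ≤ n/2 and every z with |z| ≥ 1, |z²·P″(z) + (1 − α − γ)·z·P′(z) + αγ·P(z)| ≤ |z²·F″(z) + (1 − α − γ)·z·F′(z) + αγ·F(z)|. -/

import Mathlib

/-!
Write `eulerOp α P = z P' - α P`; the operator of the theorem is `eulerOp γ ∘ eulerOp α`, so it
suffices to show that one step preserves both the inequality and the hypotheses on `F`.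

First, `|P| ≤ |F|` on the circle propagates to `|z| ≥ 1`: zeros of `F` on the circle are also
zeros of `P` and are divided out, after which the maximum modulus principle applies to the
quotient of the reversed polynomials `zⁿ P(1/z) / zⁿ F(1/z)`, holomorphic on the closed disk.
Second (Laguerre), `z F' - α F` has no zeros in `|z| > 1` when `Re α ≤ n / 2`, because there
`z F' / F = ∑ z / (z - r)` over the zeros `r` of `F` has real part `> n / 2`. Finally, if
`|z P' - α P| > |z F' - α F|` at some `|z| > 1` and `c` is their ratio, then `c F - P` has
degree `n`, all its zeros in the closed disk, and `z (cF - P)' - α (cF - P)` vanishes at `z`,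
against Laguerre.
-/

open Polynomial Metric Filter Topology

instance : Nontrivial Circle := nontrivial_of_ne 1 (-1) fun h => by
  have := congrArg ((↑) : Circle → ℂ) h
  norm_num at this

theorem mem_closure_sphere_diff_singleton {ζ : ℂ} (hζ : ‖ζ‖ = 1) :
    ζ ∈ closure (sphere (0 : ℂ) 1 \ {ζ}) := by
  let x : Circle := ⟨ζ, mem_sphere_zero_iff_norm.2 hζ⟩
  refine map_mem_closure continuous_subtype_val (dense_compl_singleton x x) fun y hy => ?_
  exact ⟨mem_sphere_zero_iff_norm.2 (Circle.norm_coe y), fun h => hy (Subtype.ext h)⟩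

theorem mem_closure_one_lt_norm {z : ℂ} (hz : 1 ≤ ‖z‖) : z ∈ closure {w : ℂ | 1 < ‖w‖} := by
  have : {w : ℂ | 1 < ‖w‖} = (closedBall 0 1)ᶜ := by ext; simp
  rw [this, closure_compl, interior_closedBall _ one_ne_zero]
  simpa using hz

theorem one_half_lt_re_div_sub {z r : ℂ} (h : ‖r‖ < ‖z‖) : 1 / 2 < (z / (z - r)).re := by
  have hzr : z - r ≠ 0 := fun h' => h.ne (by rw [sub_eq_zero.1 h'])
  set w := z / (z - r)
  have hw : ‖w - 1‖ < ‖w‖ := by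
    have : w - 1 = r / (z - r) := by simp only [w]; field_simp; ring
    rw [this, norm_div, norm_div]
    exact div_lt_div_of_pos_right h (norm_pos_iff.2 hzr)
  rw [← sq_lt_sq₀ (norm_nonneg _) (norm_nonneg _), Complex.sq_norm, Complex.sq_norm,
    Complex.normSq_apply, Complex.normSq_apply] at hw
  simp only [Complex.sub_re, Complex.one_re, Complex.sub_im, Complex.one_im, sub_zero] at hw
  linarith

namespace Polynomial

section EulerOp

variable {R : Type*} [CommRing R]

noncomputable def eulerOp (α : R) (p : R[X]) : R[X] := X * derivative p - C α * p

@[simp]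
theorem eval_eulerOp (α x : R) (p : R[X]) :
    (eulerOp α p).eval x = x * (derivative p).eval x - α * p.eval x := by
  simp [eulerOp]

theorem coeff_eulerOp (α : R) (p : R[X]) (n : ℕ) :
    (eulerOp α p).coeff n = (n - α) * p.coeff n := by
  cases n with
  | zero => simp [eulerOp]
  | succ n => simp [eulerOp, coeff_derivative]; ring

theorem natDegree_eulerOp_le (α : R) (p : R[X]) : (eulerOp α p).natDegree ≤ p.natDegree :=
  natDegree_le_iff_coeff_eq_zero.2 fun n hn => by
    rw [coeff_eulerOp, coeff_eq_zero_of_natDegree_lt hn, mul_zero]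

theorem natDegree_eulerOp [IsDomain R] {α : R} {p : R[X]} (h : (p.natDegree : R) ≠ α) :
    (eulerOp α p).natDegree = p.natDegree := by
  rcases eq_or_ne p 0 with rfl | hp
  · simp [eulerOp]
  refine natDegree_eq_of_le_of_coeff_ne_zero (natDegree_eulerOp_le α p) ?_
  rw [coeff_eulerOp]
  exact mul_ne_zero (sub_ne_zero.2 h) (leadingCoeff_ne_zero.2 hp)

theorem eval_eulerOp_eulerOp (α γ x : R) (p : R[X]) :
    (eulerOp γ (eulerOp α p)).eval x = x ^ 2 * (derivative (derivative p)).eval x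
      + (1 - α - γ) * x * (derivative p).eval x + α * γ * p.eval x := by
  simp [eulerOp]; ring

end EulerOp

theorem eval_reflect {K : Type*} [Field K] {N : ℕ} {f : K[X]} (hf : f.natDegree ≤ N) {w : K}
    (hw : w ≠ 0) : (reflect N f).eval w = w ^ N * f.eval w⁻¹ := by
  have : Invertible w⁻¹ := invertibleOfNonzero (inv_ne_zero hw)
  have h := eval₂_reflect_mul_pow (RingHom.id K) w⁻¹ N f hf
  simp only [eval₂_eq_eval_map, Polynomial.map_id, invOf_eq_inv, inv_inv] at h
  rw [← h, inv_pow, mul_left_comm, mul_inv_cancel₀ (pow_ne_zero _ hw), mul_one]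

theorem norm_eval_le_of_ne_zero_on_closedBall {G Q : ℂ[X]}
    (hG : ∀ w, ‖w‖ ≤ 1 → G.eval w ≠ 0) (hQG : ∀ w, ‖w‖ = 1 → ‖Q.eval w‖ ≤ ‖G.eval w‖)
    {w : ℂ} (hw : ‖w‖ ≤ 1) : ‖Q.eval w‖ ≤ ‖G.eval w‖ := by
  have hG' : ∀ w ∈ closedBall (0 : ℂ) 1, G.eval w ≠ 0 := fun w hw => hG w (by simpa using hw)
  have hdiff : DiffContOnCl ℂ (fun w => Q.eval w / G.eval w) (ball 0 1) := by
    refine DifferentiableOn.diffContOnCl ?_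
    rw [closure_ball _ one_ne_zero]
    exact Q.differentiable.differentiableOn.div G.differentiable.differentiableOn hG'
  have hfrontier : ∀ w ∈ frontier (ball (0 : ℂ) 1), ‖Q.eval w / G.eval w‖ ≤ 1 := by
    rw [frontier_ball _ one_ne_zero]
    intro w hw
    rw [mem_sphere_zero_iff_norm] at hw
    rw [norm_div, div_le_one (norm_pos_iff.2 (hG w hw.le))]
    exact hQG w hw
  have := Complex.norm_le_of_forall_mem_frontier_norm_le isBounded_ball hdiff hfrontier
    (by rwa [closure_ball _ one_ne_zero, mem_closedBall_zero_iff])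
  rwa [norm_div, div_le_one (norm_pos_iff.2 (hG w hw))] at this

theorem ne_zero_of_roots_le_one {F : ℂ[X]} (hF : ∀ z, F.eval z = 0 → ‖z‖ ≤ 1) :
    F ≠ 0 := by
  rintro rfl
  exact absurd (hF 2 eval_zero) (by norm_num)

theorem norm_eval_le_of_roots_lt_one {F P : ℂ[X]} (hP : P.natDegree ≤ F.natDegree)
    (hFroots : ∀ z, F.eval z = 0 → ‖z‖ < 1) (hPF : ∀ z, ‖z‖ = 1 → ‖P.eval z‖ ≤ ‖F.eval z‖)
    {z : ℂ} (hz : 1 ≤ ‖z‖) : ‖P.eval z‖ ≤ ‖F.eval z‖ := by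
  have hF0 : F ≠ 0 := ne_zero_of_roots_le_one fun z hz => (hFroots z hz).le
  set m := F.natDegree
  have hrev : ∀ w ≠ 0, ∀ f : ℂ[X], f.natDegree ≤ m →
      ‖(reflect m f).eval w‖ = ‖w‖ ^ m * ‖f.eval w⁻¹‖ := fun w hw f hf => by
    rw [eval_reflect hf hw, norm_mul, norm_pow]
  have hG : ∀ w, ‖w‖ ≤ 1 → (reflect m F).eval w ≠ 0 := by
    intro w hw
    rcases eq_or_ne w 0 with rfl | hw0
    · rw [← coeff_zero_eq_eval_zero, coeff_reflect, revAt_le (Nat.zero_le m), Nat.sub_zero]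
      exact leadingCoeff_ne_zero.2 hF0
    rw [eval_reflect le_rfl hw0]
    refine mul_ne_zero (pow_ne_zero _ hw0) fun h => ?_
    have := hFroots _ h
    rw [norm_inv, inv_lt_one₀ (norm_pos_iff.2 hw0)] at this
    linarith
  have hz0 : z ≠ 0 := norm_pos_iff.1 (by linarith)
  have hz' : ‖z⁻¹‖ ≤ 1 := by rw [norm_inv]; exact inv_le_one_of_one_le₀ hz
  have hcircle : ∀ w, ‖w‖ = 1 → ‖(reflect m P).eval w‖ ≤ ‖(reflect m F).eval w‖ := by
    intro w hw
    have hw0 : w ≠ 0 := norm_pos_iff.1 (by linarith)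
    rw [hrev _ hw0 _ hP, hrev _ hw0 _ le_rfl, hw, one_pow, one_mul, one_mul]
    exact hPF _ (by rw [norm_inv, hw, inv_one])
  have := norm_eval_le_of_ne_zero_on_closedBall hG hcircle hz'
  rw [hrev _ (inv_ne_zero hz0) _ hP, hrev _ (inv_ne_zero hz0) _ le_rfl, inv_inv] at this
  exact le_of_mul_le_mul_left this (pow_pos (norm_pos_iff.2 (inv_ne_zero hz0)) m)

theorem norm_eval_le_of_roots_le_one {F P : ℂ[X]} (hP : P.natDegree ≤ F.natDegree)
    (hFroots : ∀ z, F.eval z = 0 → ‖z‖ ≤ 1) (hPF : ∀ z, ‖z‖ = 1 → ‖P.eval z‖ ≤ ‖F.eval z‖)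
    {z : ℂ} (hz : 1 ≤ ‖z‖) : ‖P.eval z‖ ≤ ‖F.eval z‖ := by
  induction hd : F.natDegree using Nat.strong_induction_on generalizing F P with
  | _ d ih =>
  by_cases hζ : ∃ ζ, ‖ζ‖ = 1 ∧ F.IsRoot ζ
  swap
  · push Not at hζ
    exact norm_eval_le_of_roots_lt_one hP
      (fun z hz => (hFroots z hz).lt_of_ne fun h => hζ z h hz) hPF hz
  obtain ⟨ζ, hζ1, hFζ⟩ := hζ
  have hPζ : P.IsRoot ζ := by simpa [hFζ.eq_zero] using hPF ζ hζ1
  have hmonic := monic_X_sub_C ζ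
  set F₂ := F /ₘ (X - C ζ)
  set P₂ := P /ₘ (X - C ζ)
  have hF : (X - C ζ) * F₂ = F := mul_divByMonic_eq_iff_isRoot.2 hFζ
  have hPP : (X - C ζ) * P₂ = P := mul_divByMonic_eq_iff_isRoot.2 hPζ
  have hd0 : 0 < d := hd ▸ natDegree_pos_iff_degree_pos.2
    (degree_pos_of_root (ne_zero_of_roots_le_one hFroots) hFζ)
  have hdeg : F₂.natDegree = d - 1 := by
    rw [natDegree_divByMonic _ hmonic, hd, natDegree_X_sub_C]
  have hdegP : P₂.natDegree ≤ F₂.natDegree := by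
    rw [natDegree_divByMonic _ hmonic, natDegree_X_sub_C, natDegree_divByMonic _ hmonic,
      natDegree_X_sub_C]
    omega
  have hF₂roots : ∀ z, F₂.eval z = 0 → ‖z‖ ≤ 1 := fun z hz =>
    hFroots z (by rw [← hF, eval_mul, hz, mul_zero])
  -- Cancelling `‖y - ζ‖` only works off `ζ`; the point `ζ` itself follows by continuity.
  have hP₂F₂ : ∀ y, ‖y‖ = 1 → ‖P₂.eval y‖ ≤ ‖F₂.eval y‖ := by
    have hoff : ∀ y ∈ sphere (0 : ℂ) 1 \ {ζ}, ‖P₂.eval y‖ ≤ ‖F₂.eval y‖ := by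
      rintro y ⟨hy, hyζ⟩
      have := hPF y (mem_sphere_zero_iff_norm.1 hy)
      rw [← hF, ← hPP, eval_mul, eval_mul, norm_mul, norm_mul] at this
      refine le_of_mul_le_mul_left this (norm_pos_iff.2 ?_)
      simpa [sub_eq_zero] using hyζ
    intro y hy
    rcases eq_or_ne y ζ with rfl | hyζ
    · exact le_on_closure hoff (by fun_prop) (by fun_prop) (mem_closure_sphere_diff_singleton hy)
    · exact hoff y ⟨mem_sphere_zero_iff_norm.2 hy, hyζ⟩
  have := ih (d - 1) (by omega) hdegP hF₂roots hP₂F₂ hdeg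
  rw [← hF, ← hPP, eval_mul, eval_mul, norm_mul, norm_mul]
  exact mul_le_mul_of_nonneg_left this (norm_nonneg _)

theorem norm_coeff_le_of_norm_eval_le {F P : ℂ[X]} {n : ℕ} (hF : F.natDegree ≤ n)
    (hP : P.natDegree ≤ n) (h : ∀ z, 1 ≤ ‖z‖ → ‖P.eval z‖ ≤ ‖F.eval z‖) :
    ‖P.coeff n‖ ≤ ‖F.coeff n‖ := by
  have hcoeff : ∀ f : ℂ[X], f.coeff n = (reflect n f).eval 0 := fun f => by
    rw [← coeff_zero_eq_eval_zero, coeff_reflect, revAt_le (Nat.zero_le n), Nat.sub_zero]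
  rw [hcoeff, hcoeff, ← sub_nonneg]
  have hlim : Tendsto (fun w => ‖(reflect n F).eval w‖ - ‖(reflect n P).eval w‖) (𝓝[≠] 0)
      (𝓝 (‖(reflect n F).eval 0‖ - ‖(reflect n P).eval 0‖)) :=
    (Continuous.tendsto (by fun_prop) 0).mono_left nhdsWithin_le_nhds
  refine ge_of_tendsto hlim ?_
  filter_upwards [self_mem_nhdsWithin, nhdsWithin_le_nhds (closedBall_mem_nhds (0 : ℂ) one_pos)]
    with w (hw0 : w ≠ 0) hw
  rw [mem_closedBall_zero_iff] at hw
  rw [sub_nonneg, eval_reflect hF hw0, eval_reflect hP hw0, norm_mul, norm_mul]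
  refine mul_le_mul_of_nonneg_left (h _ ?_) (norm_nonneg _)
  rw [norm_inv]
  exact one_le_inv₀ (norm_pos_iff.2 hw0) |>.2 hw

theorem eval_eulerOp_ne_zero {F : ℂ[X]} {α : ℂ} (hF : 0 < F.natDegree)
    (hFroots : ∀ z, F.eval z = 0 → ‖z‖ ≤ 1) (hα : α.re ≤ F.natDegree / 2) {z : ℂ}
    (hz : 1 < ‖z‖) : (eulerOp α F).eval z ≠ 0 := by
  have hFz : F.eval z ≠ 0 := fun h => (hFroots z h).not_gt hz
  have hsplit := IsAlgClosed.splits F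
  set S := (F.roots.map fun r => z / (z - r)).sum
  have heval : (eulerOp α F).eval z = F.eval z * (S - α) := by
    have : z * (F.roots.map fun r => 1 / (z - r)).sum = S := by
      simp only [S, ← Multiset.sum_map_mul_left, mul_one_div]
    rw [eval_eulerOp, hsplit.eval_derivative_eq_eval_mul_sum hFz, ← this]
    ring
  have hS : α.re < S.re := by
    have hcard : (Multiset.card F.roots : ℝ) = F.natDegree := by
      rw [← hsplit.natDegree_eq_card_roots]
    calc α.re ≤ F.natDegree / 2 := hα
      _ = (F.roots.map fun _ => (1 / 2 : ℝ)).sum := by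
        rw [Multiset.map_const', Multiset.sum_replicate, nsmul_eq_mul, hcard]; ring
      _ < (F.roots.map fun r => (z / (z - r)).re).sum := by
        refine Multiset.sum_lt_sum_of_nonempty ?_ fun r hr => one_half_lt_re_div_sub ?_
        · exact Multiset.card_pos.1 (hsplit.natDegree_eq_card_roots ▸ hF)
        · exact (hFroots r (isRoot_of_mem_roots hr)).trans_lt hz
      _ = S.re := by
        simpa [Multiset.map_map] using (map_multiset_sum Complex.reAddGroupHom
          (F.roots.map fun r => z / (z - r))).symm
  rw [heval]
  exact mul_ne_zero hFz (sub_ne_zero.2 fun h => hS.ne (by rw [h]))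

theorem norm_eval_eulerOp_le {F P : ℂ[X]} {α : ℂ} (hF : 0 < F.natDegree)
    (hP : P.natDegree ≤ F.natDegree) (hFroots : ∀ z, F.eval z = 0 → ‖z‖ ≤ 1)
    (hPF : ∀ z, ‖z‖ = 1 → ‖P.eval z‖ ≤ ‖F.eval z‖) (hα : α.re ≤ F.natDegree / 2) {z : ℂ}
    (hz : 1 ≤ ‖z‖) : ‖(eulerOp α P).eval z‖ ≤ ‖(eulerOp α F).eval z‖ := by
  refine le_on_closure (f := fun z => ‖(eulerOp α P).eval z‖)
    (g := fun z => ‖(eulerOp α F).eval z‖) (fun z (hz : 1 < ‖z‖) => ?_)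
    (by fun_prop) (by fun_prop) (mem_closure_one_lt_norm hz)
  have hB := eval_eulerOp_ne_zero hF hFroots hα hz
  by_contra! hlt
  set c := (eulerOp α P).eval z / (eulerOp α F).eval z
  have hc : 1 < ‖c‖ := by
    rwa [norm_div, one_lt_div (norm_pos_iff.2 hB)]
  have hext : ∀ y, 1 ≤ ‖y‖ → ‖P.eval y‖ ≤ ‖F.eval y‖ := fun y hy =>
    norm_eval_le_of_roots_le_one hP hFroots hPF hy
  set R := C c * F - P
  have hRdeg : R.natDegree = F.natDegree := by
    refine natDegree_eq_of_le_of_coeff_ne_zero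
      ((natDegree_sub_le _ _).trans (max_le (natDegree_C_mul_le _ _) hP)) ?_
    rw [coeff_sub, coeff_C_mul, sub_ne_zero]
    refine fun h => (norm_coeff_le_of_norm_eval_le le_rfl hP hext).not_gt ?_
    rw [← h, norm_mul]
    exact lt_mul_of_one_lt_left (norm_pos_iff.2 (leadingCoeff_ne_zero.2
      (ne_zero_of_roots_le_one hFroots))) hc
  have hRroots : ∀ y, R.eval y = 0 → ‖y‖ ≤ 1 := by
    refine fun y hy => not_lt.1 fun hy1 => ?_
    have hFy : F.eval y ≠ 0 := fun h => (hFroots y h).not_gt hy1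
    rw [eval_sub, eval_mul, eval_C, sub_eq_zero] at hy
    have := hext y hy1.le
    rw [← hy, norm_mul] at this
    exact this.not_gt (lt_mul_of_one_lt_left (norm_pos_iff.2 hFy) hc)
  have hRz : (eulerOp α R).eval z = c * (eulerOp α F).eval z - (eulerOp α P).eval z := by
    simp only [R, eval_eulerOp, derivative_sub, derivative_C_mul, eval_sub, eval_mul, eval_C]
    ring
  refine eval_eulerOp_ne_zero (hRdeg ▸ hF) hRroots (hRdeg ▸ hα) hz ?_
  rw [hRz, div_mul_cancel₀ _ hB, sub_self]

end Polynomial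

theorem comparison_second_order
    (n : ℕ) (F P : Polynomial ℂ) (hF : F.degree = n) (hP : P.degree ≤ n)
    (hFzeros : ∀ z : ℂ, F.eval z = 0 → ‖z‖ ≤ 1)
    (hPF : ∀ z : ℂ, ‖z‖ = 1 → ‖(P.eval z)‖ ≤ ‖(F.eval z)‖)
    (α γ : ℂ) (hα : α.re ≤ (n : ℝ) / 2) (hγ : γ.re ≤ (n : ℝ) / 2) :
    ∀ z : ℂ, 1 ≤ ‖z‖ →
      ‖(z ^ 2 * (Polynomial.derivative (Polynomial.derivative P)).eval z
          + (1 - α - γ) * z * (Polynomial.derivative P).eval z + α * γ * P.eval z)‖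
        ≤ ‖(z ^ 2 * (Polynomial.derivative (Polynomial.derivative F)).eval z
            + (1 - α - γ) * z * (Polynomial.derivative F).eval z + α * γ * F.eval z)‖ := by
  intro z hz
  have hFn : F.natDegree = n := natDegree_eq_of_degree_eq_some hF
  have hPn : P.natDegree ≤ n := natDegree_le_iff_degree_le.2 hP
  rw [← eval_eulerOp_eulerOp α γ z P, ← eval_eulerOp_eulerOp α γ z F]
  rcases Nat.eq_zero_or_pos n with rfl | hn
  · have hPF₁ := hPF 1 norm_one
    rw [eq_C_of_natDegree_eq_zero hFn, eq_C_of_natDegree_le_zero hPn] at hPF₁ ⊢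
    simp only [eulerOp, derivative_C, mul_zero, zero_sub, eval_neg, eval_mul, eval_C,
      derivative_neg, derivative_mul, zero_mul, add_zero, neg_zero, norm_neg, norm_mul] at hPF₁ ⊢
    gcongr
  subst hFn
  have hαn : (F.natDegree : ℂ) ≠ α := fun h => by
    rw [← h, Complex.natCast_re] at hα
    linarith [(Nat.cast_pos (α := ℝ)).2 hn]
  have hdeg := natDegree_eulerOp hαn
  have hQroots : ∀ y, (eulerOp α F).eval y = 0 → ‖y‖ ≤ 1 :=
    fun y hy => not_lt.1 fun h => eval_eulerOp_ne_zero hn hFzeros hα h hy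
  have hQPF : ∀ y, ‖y‖ = 1 → ‖(eulerOp α P).eval y‖ ≤ ‖(eulerOp α F).eval y‖ :=
    fun y hy => norm_eval_eulerOp_le hn hPn hFzeros hPF hα hy.ge
  rw [← hdeg] at hn hγ
  exact norm_eval_eulerOp_le hn ((natDegree_eulerOp_le α P).trans (hdeg ▸ hPn)) hQroots hQPF hγ hz
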